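/- arXiv:2407.03991 — 8 statements merged into one kernel-verified Lean document; each statement's English description precedes it below -/
import Mathlib

section
/- For the two hanging springs system, the Lagrangian and Hamiltonian descriptions correspond: let x₁, x₂, p : ℝ → ℝ be differentiable. Then (x₁,x₂,p) satisfies the Hamilton (C₀) system if and only if p(t) = m·(x₁'(t)+x₂'(t)) for all t and (x₁,x₂) satisfies the Euler–Lagrange equations. -/
/-- Two hanging springs: correspondence between the Hamilton (C₀) system and the
Euler–Lagrange equations. -/
theorem springs_hamilton_iff_eulerLagrange
    (m g k₁ k₂ l₁ l₂ : ℝ) (hm : 0 < m) (hk₁ : 0 < k₁) (hk₂ : 0 < k₂)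
    (x₁ x₂ p : ℝ → ℝ)
    (hx₁ : Differentiable ℝ x₁) (hx₂ : Differentiable ℝ x₂) (hp : Differentiable ℝ p) :
    -- Hamilton (C₀) system
    ((∀ t, deriv p t = m * g - k₁ * (x₁ t - l₁)) ∧
     (∀ t, deriv p t = m * g - k₂ * (x₂ t - l₂)) ∧
     (∀ t, deriv x₁ t + deriv x₂ t = p t / m))
    ↔
    -- p is the Legendre momentum and (x₁, x₂) solves the Euler–Lagrange equations
    ((∀ t, p t = m * (deriv x₁ t + deriv x₂ t)) ∧
     Differentiable ℝ (fun t => deriv x₁ t + deriv x₂ t) ∧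
     (∀ t, deriv (fun s => m * (deriv x₁ s + deriv x₂ s)) t = m * g - k₁ * (x₁ t - l₁)) ∧
     (∀ t, deriv (fun s => m * (deriv x₁ s + deriv x₂ s)) t = m * g - k₂ * (x₂ t - l₂))) := by
  have hm' : m ≠ 0 := hm.ne'
  constructor
  · rintro ⟨h1, h2, h3⟩
    have hpm : ∀ t, p t = m * (deriv x₁ t + deriv x₂ t) := by
      intro t
      rw [h3 t]
      field_simp
    have hfun : (fun s => m * (deriv x₁ s + deriv x₂ s)) = p := by
      funext s; rw [hpm s]
    refine ⟨hpm, ?_, ?_, ?_⟩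
    · have : (fun t => deriv x₁ t + deriv x₂ t) = fun t => p t / m := funext h3
      rw [this]
      exact hp.div_const m
    · intro t; rw [hfun]; exact h1 t
    · intro t; rw [hfun]; exact h2 t
  · rintro ⟨hpm, hd, h1, h2⟩
    have hfun : (fun s => m * (deriv x₁ s + deriv x₂ s)) = p := by
      funext s; rw [hpm s]
    refine ⟨?_, ?_, ?_⟩
    · intro t; rw [← hfun]; exact h1 t
    · intro t; rw [← hfun]; exact h2 t
    · intro t; rw [hpm t]; field_simp
end

section
/- For the two hanging springs system, the Hamilton (C₀) system is equivalent to the reduced dynamics on the constraint submanifold C₁: differentiable functions x₁, x₂, p : ℝ → ℝ satisfy the Hamilton (C₀) system if and only if k₁·(x₁(t)−l₁) = k₂·(x₂(t)−l₂) for all t and (x₁,p) satisfies the reduced (C₁) system. -/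
lemma constraint_deriv (k₁ k₂ l₁ l₂ : ℝ) (x₁ x₂ : ℝ → ℝ)
    (hx₁ : Differentiable ℝ x₁) (hx₂ : Differentiable ℝ x₂)
    (h : ∀ t, k₁ * (x₁ t - l₁) = k₂ * (x₂ t - l₂)) (t : ℝ) :
    k₁ * deriv x₁ t = k₂ * deriv x₂ t := by
  have hfun : (fun t => k₁ * (x₁ t - l₁)) = fun t => k₂ * (x₂ t - l₂) := funext h
  have h1 : deriv (fun t => k₁ * (x₁ t - l₁)) t = k₁ * deriv x₁ t := by
    rw [deriv_const_mul _ ((hx₁ t).sub_const l₁), deriv_sub_const]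
  have h2 : deriv (fun t => k₂ * (x₂ t - l₂)) t = k₂ * deriv x₂ t := by
    rw [deriv_const_mul _ ((hx₂ t).sub_const l₂), deriv_sub_const]
  rw [← h1, ← h2, hfun]

/-- Two hanging springs: the Hamilton (C₀) system is equivalent to the constraint
`k₁(x₁−l₁) = k₂(x₂−l₂)` together with the reduced (C₁) dynamics. -/
theorem springs_hamilton_iff_reduced
    (m g k₁ k₂ l₁ l₂ : ℝ) (hm : 0 < m) (hk₁ : 0 < k₁) (hk₂ : 0 < k₂)
    (x₁ x₂ p : ℝ → ℝ)
    (hx₁ : Differentiable ℝ x₁) (hx₂ : Differentiable ℝ x₂) (hp : Differentiable ℝ p) :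
    -- Hamilton (C₀) system
    ((∀ t, deriv p t = m * g - k₁ * (x₁ t - l₁)) ∧
     (∀ t, deriv p t = m * g - k₂ * (x₂ t - l₂)) ∧
     (∀ t, deriv x₁ t + deriv x₂ t = p t / m))
    ↔
    -- constraint C₁ together with the reduced (C₁) system
    ((∀ t, k₁ * (x₁ t - l₁) = k₂ * (x₂ t - l₂)) ∧
     (∀ t, deriv x₁ t = k₂ * p t / (m * (k₁ + k₂))) ∧
     (∀ t, deriv p t = m * g - k₁ * (x₁ t - l₁))) := by
  have hm' := hm.ne'
  have hk₂' := hk₂.ne'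
  have hks : k₁ + k₂ ≠ 0 := by positivity
  constructor
  · rintro ⟨h1, h2, h3⟩
    have hc : ∀ t, k₁ * (x₁ t - l₁) = k₂ * (x₂ t - l₂) := by
      intro t; have := (h1 t).symm.trans (h2 t); linarith
    refine ⟨hc, fun t => ?_, h1⟩
    have hd := constraint_deriv k₁ k₂ l₁ l₂ x₁ x₂ hx₁ hx₂ hc t
    have h3t := h3 t
    field_simp at h3t ⊢
    nlinarith [h3t, hd]
  · rintro ⟨hc, h2, h3⟩
    refine ⟨h3, fun t => ?_, fun t => ?_⟩
    · rw [h3 t, hc t]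
    · have hd := constraint_deriv k₁ k₂ l₁ l₂ x₁ x₂ hx₁ hx₂ hc t
      have h2t := h2 t
      field_simp at h2t ⊢
      nlinarith [h2t, hd]
end

section
/- For the two hanging springs system, the constraint submanifold C₁ is final: for every t₀, a, b ∈ ℝ there exist differentiable functions x₁, p : ℝ → ℝ with x₁(t₀) = a and p(t₀) = b satisfying the reduced (C₁) system. -/
/-!
Shifting `x₁` by the equilibrium `l₁ + m g / k₁` turns the reduced system into a harmonic
oscillator `x' = α p`, `p' = -β x` with `α = k₂ / (m (k₁ + k₂))`, `β = k₁` and `α β > 0`, whose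
solutions through any initial point are explicit in terms of `cos` and `sin` of `√(α β) t`.
-/

open Real

namespace HarmonicOscillator

variable (α β X ω t₀ a b : ℝ)

noncomputable def position (t : ℝ) : ℝ :=
  X + (a - X) * cos (ω * (t - t₀)) + α * b / ω * sin (ω * (t - t₀))

noncomputable def momentum (t : ℝ) : ℝ :=
  -(β * (a - X) / ω) * sin (ω * (t - t₀)) + b * cos (ω * (t - t₀))

@[simp] lemma position_self : position α X ω t₀ a b t₀ = a := by
  simp [position]

@[simp] lemma momentum_self : momentum β X ω t₀ a b t₀ = b := by
  simp [momentum]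

lemma hasDerivAt_phase (t : ℝ) : HasDerivAt (fun t ↦ ω * (t - t₀)) ω t := by
  simpa using ((hasDerivAt_id t).sub_const t₀).const_mul ω

variable {α β ω}

lemma hasDerivAt_position (hω : ω ^ 2 = α * β) (hω₀ : ω ≠ 0) (t : ℝ) :
    HasDerivAt (position α X ω t₀ a b) (α * momentum β X ω t₀ a b t) t := by
  have hcos := ((hasDerivAt_cos _).comp t (hasDerivAt_phase ω t₀ t)).const_mul (a - X)
  have hsin := ((hasDerivAt_sin _).comp t (hasDerivAt_phase ω t₀ t)).const_mul (α * b / ω)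
  refine ((hcos.const_add X).add hsin).congr_deriv ?_
  simp only [momentum]
  field_simp
  linear_combination -(a - X) * sin (ω * (t - t₀)) * hω

lemma hasDerivAt_momentum (hω : ω ^ 2 = α * β) (hω₀ : ω ≠ 0) (t : ℝ) :
    HasDerivAt (momentum β X ω t₀ a b) (-β * (position α X ω t₀ a b t - X)) t := by
  have hsin := ((hasDerivAt_sin _).comp t (hasDerivAt_phase ω t₀ t)).const_mul (-(β * (a - X) / ω))
  have hcos := ((hasDerivAt_cos _).comp t (hasDerivAt_phase ω t₀ t)).const_mul b
  refine (hsin.add hcos).congr_deriv ?_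
  simp only [position]
  field_simp
  linear_combination -b * sin (ω * (t - t₀)) * hω

theorem exists_solution (hαβ : 0 < α * β) :
    ∃ x p : ℝ → ℝ, x t₀ = a ∧ p t₀ = b ∧
      (∀ t, HasDerivAt x (α * p t) t) ∧ (∀ t, HasDerivAt p (-β * (x t - X)) t) := by
  have hω : √(α * β) ^ 2 = α * β := sq_sqrt hαβ.le
  have hω₀ : √(α * β) ≠ 0 := (sqrt_pos.2 hαβ).ne'
  exact ⟨position α X _ t₀ a b, momentum β X _ t₀ a b, position_self .., momentum_self ..,
    hasDerivAt_position X t₀ a b hω hω₀, hasDerivAt_momentum X t₀ a b hω hω₀⟩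

end HarmonicOscillator

theorem springs_C₁_final_general
    (m g k₁ k₂ l₁ : ℝ) (hm : 0 < m) (hk₁ : 0 < k₁) (hk₂ : 0 < k₂) :
    ∀ t₀ a b : ℝ, ∃ x₁ p : ℝ → ℝ,
      Differentiable ℝ x₁ ∧ Differentiable ℝ p ∧
      x₁ t₀ = a ∧ p t₀ = b ∧
      (∀ t, deriv x₁ t = k₂ * p t / (m * (k₁ + k₂))) ∧
      (∀ t, deriv p t = m * g - k₁ * (x₁ t - l₁)) := by
  intro t₀ a b
  have hαβ : 0 < k₂ / (m * (k₁ + k₂)) * k₁ := by positivity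
  obtain ⟨x₁, p, hx₁, hp, hx₁', hp'⟩ :=
    HarmonicOscillator.exists_solution (l₁ + m * g / k₁) t₀ a b hαβ
  refine ⟨x₁, p, fun t ↦ (hx₁' t).differentiableAt, fun t ↦ (hp' t).differentiableAt,
    hx₁, hp, fun t ↦ ?_, fun t ↦ ?_⟩
  · rw [(hx₁' t).deriv]
    ring
  · rw [(hp' t).deriv]
    field_simp
    ring

/-- Two hanging springs: the constraint submanifold `C₁` is final, i.e. through every
point of `C₁` there passes a solution of the reduced (C₁) Hamilton equations. -/
theorem springs_C₁_final
    (m g k₁ k₂ l₁ l₂ : ℝ) (hm : 0 < m) (hk₁ : 0 < k₁) (hk₂ : 0 < k₂) :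
    ∀ t₀ a b : ℝ, ∃ x₁ p : ℝ → ℝ,
      Differentiable ℝ x₁ ∧ Differentiable ℝ p ∧
      x₁ t₀ = a ∧ p t₀ = b ∧
      (∀ t, deriv x₁ t = k₂ * p t / (m * (k₁ + k₂))) ∧
      (∀ t, deriv p t = m * g - k₁ * (x₁ t - l₁)) :=
  springs_C₁_final_general m g k₁ k₂ l₁ hm hk₁ hk₂
end

section
/- For the two hanging springs system, the full correspondence between Euler–Lagrange solutions and the constrained reduced dynamics holds: differentiable x₁, x₂ : ℝ → ℝ with t ↦ x₁'(t)+x₂'(t) differentiable satisfy the Euler–Lagrange equations if and only if k₁·(x₁(t)−l₁) = k₂·(x₂(t)−l₂) for all t, x₁ is twice differentiable, and m·(k₁+k₂)·x₁''(t) = k₂·m·g − k₁·k₂·(x₁(t)−l₁) for all t. -/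
private lemma springs_aux (k₁ k₂ l₁ l₂ : ℝ) (hk₂ : k₂ ≠ 0)
    (x₁ x₂ : ℝ → ℝ) (hx₁ : Differentiable ℝ x₁)
    (hC : ∀ t, k₁ * (x₁ t - l₁) = k₂ * (x₂ t - l₂)) :
    (fun t => deriv x₁ t + deriv x₂ t) = fun t => ((k₂ + k₁) / k₂) * deriv x₁ t := by
  have hx2eq : x₂ = fun t => l₂ + (k₁ / k₂) * (x₁ t - l₁) := by
    funext t
    have h := hC t
    field_simp
    linarith
  have hd2 : deriv x₂ = fun t => (k₁ / k₂) * deriv x₁ t := by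
    rw [hx2eq]
    funext t
    rw [deriv_const_add, deriv_const_mul _ ((hx₁ t).sub_const l₁), deriv_sub_const]
  funext t
  rw [hd2]
  field_simp

/-- Two hanging springs: full correspondence between Euler–Lagrange solutions and the
constrained reduced dynamics on `C₁`. -/
theorem springs_eulerLagrange_iff_constrained_reduced
    (m g k₁ k₂ l₁ l₂ : ℝ) (hm : 0 < m) (hk₁ : 0 < k₁) (hk₂ : 0 < k₂)
    (x₁ x₂ : ℝ → ℝ)
    (hx₁ : Differentiable ℝ x₁) (hx₂ : Differentiable ℝ x₂)
    (hsum : Differentiable ℝ (fun t => deriv x₁ t + deriv x₂ t)) :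
    -- Euler–Lagrange equations
    ((∀ t, deriv (fun s => m * (deriv x₁ s + deriv x₂ s)) t = m * g - k₁ * (x₁ t - l₁)) ∧
     (∀ t, deriv (fun s => m * (deriv x₁ s + deriv x₂ s)) t = m * g - k₂ * (x₂ t - l₂)))
    ↔
    -- constraint C₁, twice differentiability of x₁, and the reduced second-order dynamics
    ((∀ t, k₁ * (x₁ t - l₁) = k₂ * (x₂ t - l₂)) ∧
     Differentiable ℝ (deriv x₁) ∧
     (∀ t, m * (k₁ + k₂) * deriv (deriv x₁) t = k₂ * m * g - k₁ * k₂ * (x₁ t - l₁))) := by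
  have hk₂' : k₂ ≠ 0 := hk₂.ne'
  have hC0 : (k₂ + k₁) / k₂ ≠ 0 := by positivity
  constructor
  · rintro ⟨h1, h2⟩
    have hC : ∀ t, k₁ * (x₁ t - l₁) = k₂ * (x₂ t - l₂) := by
      intro t
      have := (h1 t).symm.trans (h2 t)
      linarith
    have hsumeq := springs_aux k₁ k₂ l₁ l₂ hk₂' x₁ x₂ hx₁ hC
    have hd1 : Differentiable ℝ (deriv x₁) := by
      have h := hsum.const_mul (((k₂ + k₁) / k₂)⁻¹)
      have : (fun t => ((k₂ + k₁) / k₂)⁻¹ * (deriv x₁ t + deriv x₂ t)) = deriv x₁ := by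
        funext t
        rw [congrFun hsumeq t]
        field_simp
      rwa [this] at h
    refine ⟨hC, hd1, fun t => ?_⟩
    have key : deriv (fun s => m * (deriv x₁ s + deriv x₂ s)) t
        = m * (((k₂ + k₁) / k₂) * deriv (deriv x₁) t) := by
      have : (fun s => m * (deriv x₁ s + deriv x₂ s))
          = fun s => m * (((k₂ + k₁) / k₂) * deriv x₁ s) := by
        funext s; rw [congrFun hsumeq s]
      rw [this, deriv_const_mul _ ((hd1 t).const_mul _), deriv_const_mul _ (hd1 t)]
    have h1t := h1 t
    rw [key] at h1t
    have : m * (((k₂ + k₁) / k₂) * deriv (deriv x₁) t) = m * g - k₁ * (x₁ t - l₁) := h1t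
    field_simp at this
    nlinarith [this]
  · rintro ⟨hC, hd1, hred⟩
    have hsumeq := springs_aux k₁ k₂ l₁ l₂ hk₂' x₁ x₂ hx₁ hC
    have key : ∀ t, deriv (fun s => m * (deriv x₁ s + deriv x₂ s)) t
        = m * (((k₂ + k₁) / k₂) * deriv (deriv x₁) t) := by
      intro t
      have : (fun s => m * (deriv x₁ s + deriv x₂ s))
          = fun s => m * (((k₂ + k₁) / k₂) * deriv x₁ s) := by
        funext s; rw [congrFun hsumeq s]
      rw [this, deriv_const_mul _ ((hd1 t).const_mul _), deriv_const_mul _ (hd1 t)]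
    constructor
    · intro t
      rw [key t]
      have h := hred t
      field_simp
      nlinarith [h]
    · intro t
      rw [key t]
      have h := hred t
      have hc := hC t
      field_simp
      nlinarith [h, hc]
end

section
/- The phase space C₀ of the Hamiltonian formulation of the wave equation is final: for every point (t₀,x₀) ∈ ℝ² and every prescribed tuple of values (u₀, a₀, b₀, P₁, P₂, Q₁, Q₂) ∈ ℝ⁷, there exist differentiable functions u, a, b, p¹, p², q¹, q² : ℝ² → ℝ satisfying the wave-equation Hamilton system with u(t₀,x₀) = u₀, a(t₀,x₀) = a₀, b(t₀,x₀) = b₀, p¹(t₀,x₀) = P₁, p²(t₀,x₀) = P₂, q¹(t₀,x₀) = Q₁ and q²(t₀,x₀) = Q₂. -/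
/-- Partial derivative with respect to the first variable `t`. -/
noncomputable def pdt (f : ℝ × ℝ → ℝ) (P : ℝ × ℝ) : ℝ :=
  deriv (fun s => f (s, P.2)) P.1

/-- Partial derivative with respect to the second variable `x`. -/
noncomputable def pdx (f : ℝ × ℝ → ℝ) (P : ℝ × ℝ) : ℝ :=
  deriv (fun s => f (P.1, s)) P.2

/-- The Hamilton system for the wave equation, regarded as an exterior differential
system: equations (i)–(vii). -/
def WaveHamiltonSystem (u a b p₁ p₂ q₁ q₂ : ℝ × ℝ → ℝ) : Prop :=
  (∀ P, pdt u P = a P) ∧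
  (∀ P, pdx u P = b P) ∧
  (∀ P, pdt a P = pdx b P) ∧
  (∀ P, pdx a P = pdt b P) ∧
  (∀ P, pdt p₁ P + pdx p₂ P = 0) ∧
  (∀ P, p₁ P + pdt q₁ P + pdx q₂ P = 0) ∧
  (∀ P, p₂ P = pdx q₁ P + pdt q₂ P)

lemma dlin (c m k d t : ℝ) : deriv (fun s : ℝ => c + m * (s - k) + d) t = m := by
  have h : HasDerivAt (fun s : ℝ => c + m * (s - k) + d) m t := by
    simpa using ((((hasDerivAt_id t).sub_const k).const_mul m).const_add c).add_const d
  exact h.deriv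

/-- Affine function of two variables. -/
noncomputable def aff (c m n t₀ x₀ : ℝ) : ℝ × ℝ → ℝ :=
  fun P => c + m * (P.1 - t₀) + n * (P.2 - x₀)

lemma aff_pdt (c m n t₀ x₀ : ℝ) (P : ℝ × ℝ) : pdt (aff c m n t₀ x₀) P = m := by
  simp only [pdt, aff]
  exact dlin c m t₀ (n * (P.2 - x₀)) P.1

lemma aff_pdx (c m n t₀ x₀ : ℝ) (P : ℝ × ℝ) : pdx (aff c m n t₀ x₀) P = n := by
  simp only [pdx, aff]
  have h : (fun s : ℝ => c + m * (P.1 - t₀) + n * (s - x₀))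
      = fun s : ℝ => c + n * (s - x₀) + m * (P.1 - t₀) := by
    funext s; ring
  rw [h]
  exact dlin c n x₀ (m * (P.1 - t₀)) P.2

lemma aff_diff (c m n t₀ x₀ : ℝ) : Differentiable ℝ (aff c m n t₀ x₀) := by
  unfold aff; fun_prop

lemma aff_pt (c m n t₀ x₀ : ℝ) : aff c m n t₀ x₀ (t₀, x₀) = c := by
  simp [aff]

/-- The phase space `C₀` of the Hamiltonian formulation of the wave equation is final:
through every prescribed point there passes a solution of the Hamilton system. -/
theorem wave_C₀_final
    (t₀ x₀ u₀ a₀ b₀ P₁ P₂ Q₁ Q₂ : ℝ) :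
    ∃ u a b p₁ p₂ q₁ q₂ : ℝ × ℝ → ℝ,
      Differentiable ℝ u ∧ Differentiable ℝ a ∧ Differentiable ℝ b ∧
      Differentiable ℝ p₁ ∧ Differentiable ℝ p₂ ∧
      Differentiable ℝ q₁ ∧ Differentiable ℝ q₂ ∧
      WaveHamiltonSystem u a b p₁ p₂ q₁ q₂ ∧
      u (t₀, x₀) = u₀ ∧ a (t₀, x₀) = a₀ ∧ b (t₀, x₀) = b₀ ∧
      p₁ (t₀, x₀) = P₁ ∧ p₂ (t₀, x₀) = P₂ ∧
      q₁ (t₀, x₀) = Q₁ ∧ q₂ (t₀, x₀) = Q₂ := by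
  refine ⟨aff u₀ a₀ b₀ t₀ x₀, aff a₀ 0 0 t₀ x₀, aff b₀ 0 0 t₀ x₀,
      aff P₁ 0 0 t₀ x₀, aff P₂ 0 0 t₀ x₀,
      aff Q₁ (-P₁) P₂ t₀ x₀, aff Q₂ 0 0 t₀ x₀,
      aff_diff _ _ _ _ _, aff_diff _ _ _ _ _, aff_diff _ _ _ _ _,
      aff_diff _ _ _ _ _, aff_diff _ _ _ _ _, aff_diff _ _ _ _ _, aff_diff _ _ _ _ _,
      ⟨?_, ?_, ?_, ?_, ?_, ?_, ?_⟩,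
      aff_pt .., aff_pt .., aff_pt .., aff_pt .., aff_pt .., aff_pt .., aff_pt ..⟩ <;>
    intro P <;> simp [aff_pdt, aff_pdx, aff]
end

section
/- Solutions of the unified (Lagrangian–Hamiltonian) Herglotz system with nowhere-vanishing multiplier satisfy the generalized Herglotz–Euler–Lagrange equation: let L : ℝ³ → ℝ be differentiable and let q, v, z, p, μ : ℝ → ℝ be differentiable functions satisfying the unified Herglotz system with μ(t) ≠ 0 for all t. Then the function t ↦ (∂L/∂v)(q(t),v(t),z(t)) is differentiable and (d/dt)[(∂L/∂v)(q(t),v(t),z(t))] = (∂L/∂q)(q(t),v(t),z(t)) + (∂L/∂z)(q(t),v(t),z(t))·(∂L/∂v)(q(t),v(t),z(t)) for all t. -/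
/-- Partial derivative of the Herglotz Lagrangian `L(q,v,z)` with respect to `q`. -/
noncomputable def Lq (L : ℝ × ℝ × ℝ → ℝ) (q v z : ℝ) : ℝ :=
  deriv (fun s => L (s, v, z)) q

/-- Partial derivative of the Herglotz Lagrangian `L(q,v,z)` with respect to `v`. -/
noncomputable def Lv (L : ℝ × ℝ × ℝ → ℝ) (q v z : ℝ) : ℝ :=
  deriv (fun s => L (q, s, z)) v

/-- Partial derivative of the Herglotz Lagrangian `L(q,v,z)` with respect to `z`. -/
noncomputable def Lz (L : ℝ × ℝ × ℝ → ℝ) (q v z : ℝ) : ℝ :=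
  deriv (fun s => L (q, v, s)) z

/-- The unified (Lagrangian–Hamiltonian) Herglotz system for curves `q, v, z, p, μ`. -/
def UnifiedHerglotz (L : ℝ × ℝ × ℝ → ℝ) (q v z p μ : ℝ → ℝ) : Prop :=
  (∀ t, deriv q t = v t) ∧
  (∀ t, deriv z t = L (q t, v t, z t)) ∧
  (∀ t, deriv μ t = -μ t * Lz L (q t) (v t) (z t)) ∧
  (∀ t, deriv p t = μ t * Lq L (q t) (v t) (z t)) ∧
  (∀ t, p t = μ t * Lv L (q t) (v t) (z t))

/-! Herglotz's multiplier `μ` only rescales the momentum: `∂L/∂v = p / μ`, and the quotient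
rule turns `p' = μ ∂L/∂q`, `μ' = -μ ∂L/∂z` into the Herglotz–Euler–Lagrange equation. -/

theorem HasDerivAt.of_mul_eq {𝕜 : Type*} [NontriviallyNormedField 𝕜] {p μ f : 𝕜 → 𝕜}
    {p' μ' t : 𝕜} (hpf : ∀ s, p s = μ s * f s) (hμne : ∀ s, μ s ≠ 0)
    (hp : HasDerivAt p p' t) (hμ : HasDerivAt μ μ' t) :
    HasDerivAt f ((p' - μ' * f t) / μ t) t := by
  have hf : (fun s => p s / μ s) = f :=
    funext fun s => by rw [hpf, mul_div_cancel_left₀ _ (hμne s)]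
  have hdiv := hp.fun_div hμ (hμne t)
  rw [hf, hpf t] at hdiv
  refine hdiv.congr_deriv ?_
  field_simp [hμne t]

theorem UnifiedHerglotz.hasDerivAt_Lv {L : ℝ × ℝ × ℝ → ℝ} {q v z p μ : ℝ → ℝ}
    (hsys : UnifiedHerglotz L q v z p μ) (hp : Differentiable ℝ p) (hμ : Differentiable ℝ μ)
    (hμne : ∀ t, μ t ≠ 0) (t : ℝ) :
    HasDerivAt (fun s => Lv L (q s) (v s) (z s))
      (Lq L (q t) (v t) (z t) + Lz L (q t) (v t) (z t) * Lv L (q t) (v t) (z t)) t := by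
  obtain ⟨-, -, hμ', hp', hpv⟩ := hsys
  have hp_t := (hp t).hasDerivAt
  have hμ_t := (hμ t).hasDerivAt
  rw [hp' t] at hp_t
  rw [hμ' t] at hμ_t
  refine (hp_t.of_mul_eq hpv hμne hμ_t).congr_deriv ?_
  field_simp [hμne t]
  ring

theorem unifiedHerglotz_implies_herglotzEulerLagrange_general
    (L : ℝ × ℝ × ℝ → ℝ)
    (q v z p μ : ℝ → ℝ)
    (hp : Differentiable ℝ p) (hμ : Differentiable ℝ μ)
    (hsys : UnifiedHerglotz L q v z p μ)
    (hμne : ∀ t, μ t ≠ 0) :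
    Differentiable ℝ (fun t => Lv L (q t) (v t) (z t)) ∧
    ∀ t, deriv (fun s => Lv L (q s) (v s) (z s)) t
        = Lq L (q t) (v t) (z t) + Lz L (q t) (v t) (z t) * Lv L (q t) (v t) (z t) := by
  have h := hsys.hasDerivAt_Lv hp hμ hμne
  exact ⟨fun t => (h t).differentiableAt, fun t => (h t).deriv⟩

/-- Solutions of the unified Herglotz system with nowhere-vanishing multiplier satisfy
the generalized Herglotz–Euler–Lagrange equation. -/
theorem unifiedHerglotz_implies_herglotzEulerLagrange
    (L : ℝ × ℝ × ℝ → ℝ) (hL : Differentiable ℝ L)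
    (q v z p μ : ℝ → ℝ)
    (hq : Differentiable ℝ q) (hv : Differentiable ℝ v) (hz : Differentiable ℝ z)
    (hp : Differentiable ℝ p) (hμ : Differentiable ℝ μ)
    (hsys : UnifiedHerglotz L q v z p μ)
    (hμne : ∀ t, μ t ≠ 0) :
    Differentiable ℝ (fun t => Lv L (q t) (v t) (z t)) ∧
    ∀ t, deriv (fun s => Lv L (q s) (v s) (z s)) t
        = Lq L (q t) (v t) (z t) + Lz L (q t) (v t) (z t) * Lv L (q t) (v t) (z t) :=
  unifiedHerglotz_implies_herglotzEulerLagrange_general L q v z p μ hp hμ hsys hμne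
end

section
/- Every solution of the generalized Herglotz–Euler–Lagrange equation lifts to a solution of the unified (Lagrangian–Hamiltonian) Herglotz system: let L : ℝ³ → ℝ be differentiable, let q : ℝ → ℝ be differentiable with differentiable derivative v := q', let z : ℝ → ℝ be differentiable with z'(t) = L(q(t),v(t),z(t)), assume t ↦ (∂L/∂z)(q(t),v(t),z(t)) is continuous, t ↦ (∂L/∂v)(q(t),v(t),z(t)) is differentiable, and the generalized Herglotz–Euler–Lagrange equation (d/dt)[(∂L/∂v)(q(t),v(t),z(t))] = (∂L/∂q)(q(t),v(t),z(t)) + (∂L/∂z)(q(t),v(t),z(t))·(∂L/∂v)(q(t),v(t),z(t)) holds for all t. Fix t₀ ∈ ℝ and define μ(t) := exp(−∫_{t₀}^{t} (∂L/∂z)(q(s),v(s),z(s)) ds) and p(t) := μ(t)·(∂L/∂v)(q(t),v(t),z(t)). Then μ is nowhere zero and (q, v, z, p, μ) satisfies the unified Herglotz system. -/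
/-!
The multiplier `μ = exp(-∫ ∂L/∂z)` is an integrating factor: it solves `μ' = -μ·(∂L/∂z)`, so
multiplying the Herglotz–Euler–Lagrange equation `(∂L/∂v)' = ∂L/∂q + (∂L/∂z)(∂L/∂v)` by `μ`
cancels the dissipative term and leaves `(μ·∂L/∂v)' = μ·∂L/∂q`, which is the momentum equation.
-/

open intervalIntegral

theorem hasDerivAt_exp_neg_integral {f : ℝ → ℝ} (hf : Continuous f) (t₀ t : ℝ) :
    HasDerivAt (fun u => Real.exp (-∫ s in t₀..u, f s))
      (-Real.exp (-∫ s in t₀..t, f s) * f t) t := by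
  have hF : HasDerivAt (fun u => ∫ s in t₀..u, f s) (f t) t :=
    integral_hasDerivAt_right (hf.intervalIntegrable _ _) (hf.stronglyMeasurableAtFilter _ _)
      hf.continuousAt
  simpa only [neg_mul, mul_neg, mul_comm] using hF.fun_neg.exp

theorem HasDerivAt.mul_integratingFactor {μ g : ℝ → ℝ} {a b t : ℝ}
    (hμ : HasDerivAt μ (-μ t * a) t) (hg : HasDerivAt g (b + a * g t) t) :
    HasDerivAt (fun s => μ s * g s) (μ t * b) t :=
  (hμ.fun_mul hg).congr_deriv (by ring)

theorem herglotzEulerLagrange_lifts_to_unified_general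
    (L : ℝ × ℝ × ℝ → ℝ)
    (q v z : ℝ → ℝ)
    (hveq : ∀ t, v t = deriv q t)
    (hzeq : ∀ t, deriv z t = L (q t, v t, z t))
    (hLzcont : Continuous (fun t => Lz L (q t) (v t) (z t)))
    (hLvdiff : Differentiable ℝ (fun t => Lv L (q t) (v t) (z t)))
    (hEL : ∀ t, deriv (fun s => Lv L (q s) (v s) (z s)) t
        = Lq L (q t) (v t) (z t) + Lz L (q t) (v t) (z t) * Lv L (q t) (v t) (z t))
    (t₀ : ℝ)
    (μ : ℝ → ℝ) (hμdef : ∀ t, μ t = Real.exp (-(∫ s in t₀..t, Lz L (q s) (v s) (z s))))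
    (p : ℝ → ℝ) (hpdef : ∀ t, p t = μ t * Lv L (q t) (v t) (z t)) :
    (∀ t, μ t ≠ 0) ∧ UnifiedHerglotz L q v z p μ := by
  have hμ t : HasDerivAt μ (-μ t * Lz L (q t) (v t) (z t)) t := by
    rw [funext hμdef]
    exact hasDerivAt_exp_neg_integral hLzcont t₀ t
  have hp t : HasDerivAt p (μ t * Lq L (q t) (v t) (z t)) t := by
    rw [funext hpdef]
    exact (hμ t).mul_integratingFactor (hEL t ▸ (hLvdiff t).hasDerivAt)
  exact ⟨fun t => hμdef t ▸ (Real.exp_pos _).ne', fun t => (hveq t).symm, hzeq,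
    fun t => (hμ t).deriv, fun t => (hp t).deriv, hpdef⟩

/-- Every solution of the generalized Herglotz–Euler–Lagrange equation lifts to a
solution of the unified Herglotz system, the multiplier being
`μ(t) = exp(−∫_{t₀}^{t} (∂L/∂z)∘Φ)` and the momentum `p = μ·(∂L/∂v)∘Φ`. -/
theorem herglotzEulerLagrange_lifts_to_unified
    (L : ℝ × ℝ × ℝ → ℝ) (hL : Differentiable ℝ L)
    (q v z : ℝ → ℝ)
    (hq : Differentiable ℝ q) (hveq : ∀ t, v t = deriv q t) (hv : Differentiable ℝ v)
    (hz : Differentiable ℝ z) (hzeq : ∀ t, deriv z t = L (q t, v t, z t))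
    (hLzcont : Continuous (fun t => Lz L (q t) (v t) (z t)))
    (hLvdiff : Differentiable ℝ (fun t => Lv L (q t) (v t) (z t)))
    (hEL : ∀ t, deriv (fun s => Lv L (q s) (v s) (z s)) t
        = Lq L (q t) (v t) (z t) + Lz L (q t) (v t) (z t) * Lv L (q t) (v t) (z t))
    (t₀ : ℝ)
    (μ : ℝ → ℝ) (hμdef : ∀ t, μ t = Real.exp (-(∫ s in t₀..t, Lz L (q s) (v s) (z s))))
    (p : ℝ → ℝ) (hpdef : ∀ t, p t = μ t * Lv L (q t) (v t) (z t)) :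
    (∀ t, μ t ≠ 0) ∧ UnifiedHerglotz L q v z p μ :=
  herglotzEulerLagrange_lifts_to_unified_general L q v z hveq hzeq hLzcont hLvdiff hEL t₀ μ hμdef p
    hpdef
end

section
/- Solutions of the unified vakonomic Herglotz field system with nowhere-vanishing multiplier satisfy the Herglotz field equations: let m, n ≥ 1, let L : ℝⁿ × (ℝⁿ)ᵐ × ℝᵐ → ℝ be differentiable with partial derivatives ∂L/∂uᵅ, ∂L/∂vᵅᵢ, ∂L/∂zⁱ, and let u : ℝᵐ → ℝⁿ, z : ℝᵐ → ℝᵐ, μ : ℝᵐ → ℝ and p = (pᵅᵢ) : ℝᵐ → ℝ^{n×m} be differentiable functions satisfying the unified Herglotz field system with μ(x) ≠ 0 for all x. Then for every α the functions x ↦ (∂L/∂vᵅᵢ)(Φ(x)) are differentiable and ∑ᵢ ∂/∂xⁱ[(∂L/∂vᵅᵢ)(Φ(x))] = (∂L/∂uᵅ)(Φ(x)) + ∑ᵢ (∂L/∂zⁱ)(Φ(x))·(∂L/∂vᵅᵢ)(Φ(x)) for all x ∈ ℝᵐ. -/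
/-!
Along a solution the Legendre relation `p = μ · ∂L/∂v` can be divided by the nowhere-vanishing
multiplier, so `∂L/∂vᵅᵢ ∘ Φ = pᵅᵢ / μ` is differentiable. Differentiating `pᵅᵢ = μ · (∂L/∂vᵅᵢ ∘ Φ)`
in the direction `xⁱ` and using `∂ᵢμ = -μ · ∂L/∂zⁱ` gives
`∂ᵢ(∂L/∂vᵅᵢ ∘ Φ) = ∂ᵢpᵅᵢ / μ + ∂L/∂zⁱ · ∂L/∂vᵅᵢ`; summing over `i`, the divergence equation for
`p` turns the first terms into `∂L/∂uᵅ`.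
-/

open scoped BigOperators

variable {m n : ℕ}

/-- Partial derivative `∂L/∂uᵅ` of a field Lagrangian `L(u, v, z)`. -/
noncomputable def dLu (L : (Fin n → ℝ) × (Fin n → Fin m → ℝ) × (Fin m → ℝ) → ℝ)
    (P : (Fin n → ℝ) × (Fin n → Fin m → ℝ) × (Fin m → ℝ)) (α : Fin n) : ℝ :=
  fderiv ℝ L P (Pi.single α 1, 0, 0)

/-- Partial derivative `∂L/∂vᵅᵢ` of a field Lagrangian `L(u, v, z)`. -/
noncomputable def dLv (L : (Fin n → ℝ) × (Fin n → Fin m → ℝ) × (Fin m → ℝ) → ℝ)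
    (P : (Fin n → ℝ) × (Fin n → Fin m → ℝ) × (Fin m → ℝ)) (α : Fin n) (i : Fin m) : ℝ :=
  fderiv ℝ L P (0, Pi.single α (Pi.single i 1), 0)

/-- Partial derivative `∂L/∂zⁱ` of a field Lagrangian `L(u, v, z)`. -/
noncomputable def dLz (L : (Fin n → ℝ) × (Fin n → Fin m → ℝ) × (Fin m → ℝ) → ℝ)
    (P : (Fin n → ℝ) × (Fin n → Fin m → ℝ) × (Fin m → ℝ)) (i : Fin m) : ℝ :=
  fderiv ℝ L P (0, 0, Pi.single i 1)

/-- The first jet prolongation `Φ(x) = (u(x), (∂uᵅ/∂xⁱ)(x), z(x))` of the fields. -/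
noncomputable def jetProl (u : (Fin m → ℝ) → (Fin n → ℝ)) (z : (Fin m → ℝ) → (Fin m → ℝ))
    (x : Fin m → ℝ) : (Fin n → ℝ) × (Fin n → Fin m → ℝ) × (Fin m → ℝ) :=
  (u x, fun α i => fderiv ℝ u x (Pi.single i 1) α, z x)

open Finset

theorem fderiv_apply₂_apply {𝕜 E F ι κ : Type*} [NontriviallyNormedField 𝕜]
    [NormedAddCommGroup E] [NormedSpace 𝕜 E] [NormedAddCommGroup F] [NormedSpace 𝕜 F]
    [Fintype ι] [Fintype κ] {p : E → ι → κ → F} {x : E} (hp : DifferentiableAt 𝕜 p x)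
    (a : ι) (b : κ) (v : E) : fderiv 𝕜 (fun y => p y a b) x v = fderiv 𝕜 p x v a b := by
  rw [fderiv_apply (differentiableAt_pi.1 hp a) b, fderiv_apply hp a]
  rfl

theorem fderiv_apply_eq_div_add_mul_of_eq_mul {E : Type*} [NormedAddCommGroup E]
    [NormedSpace ℝ E] {f g q : E → ℝ} {x v : E} {c : ℝ} (hg : DifferentiableAt ℝ g x)
    (hq : DifferentiableAt ℝ q x) (hf : ∀ y, f y = g y * q y) (hx : g x ≠ 0)
    (hgv : fderiv ℝ g x v = -g x * c) :
    fderiv ℝ q x v = fderiv ℝ f x v / g x + c * q x := by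
  have hfv : fderiv ℝ f x v = g x * fderiv ℝ q x v + q x * fderiv ℝ g x v := by
    rw [funext hf, fderiv_fun_mul hg hq]
    rfl
  rw [hfv, hgv]
  field_simp
  ring

theorem unifiedHerglotzField_implies_herglotzFieldEqs_general
    (L : (Fin n → ℝ) × (Fin n → Fin m → ℝ) × (Fin m → ℝ) → ℝ)
    (u : (Fin m → ℝ) → (Fin n → ℝ)) (z : (Fin m → ℝ) → (Fin m → ℝ))
    (μ : (Fin m → ℝ) → ℝ) (p : (Fin m → ℝ) → Fin n → Fin m → ℝ)
    (hμ : Differentiable ℝ μ) (hp : Differentiable ℝ p)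
    -- unified Herglotz field system:
    (hμeq : ∀ x i, fderiv ℝ μ x (Pi.single i 1) = -μ x * dLz L (jetProl u z x) i)
    (hpeq : ∀ x α, ∑ i, fderiv ℝ p x (Pi.single i 1) α i = μ x * dLu L (jetProl u z x) α)
    (hleg : ∀ x α i, p x α i = μ x * dLv L (jetProl u z x) α i)
    (hμne : ∀ x, μ x ≠ 0) :
    (∀ α i, Differentiable ℝ (fun x => dLv L (jetProl u z x) α i)) ∧
    ∀ x α, ∑ i, fderiv ℝ (fun y => dLv L (jetProl u z y) α i) x (Pi.single i 1)
        = dLu L (jetProl u z x) α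
          + ∑ i, dLz L (jetProl u z x) i * dLv L (jetProl u z x) α i := by
  have hdLv : ∀ α i, Differentiable ℝ (fun x => dLv L (jetProl u z x) α i) := by
    intro α i
    have hdiv : (fun x => dLv L (jetProl u z x) α i) = fun x => p x α i * (μ x)⁻¹ :=
      funext fun x => by rw [hleg, mul_comm (μ x), mul_inv_cancel_right₀ (hμne x)]
    rw [hdiv]
    exact (differentiable_pi.1 (differentiable_pi.1 hp α) i).mul (hμ.inv hμne)
  refine ⟨hdLv, fun x α => ?_⟩
  have hterm : ∀ i, fderiv ℝ (fun y => dLv L (jetProl u z y) α i) x (Pi.single i 1)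
      = fderiv ℝ p x (Pi.single i 1) α i / μ x
        + dLz L (jetProl u z x) i * dLv L (jetProl u z x) α i := by
    intro i
    rw [fderiv_apply_eq_div_add_mul_of_eq_mul (hμ x) (hdLv α i x) (fun y => hleg y α i)
      (hμne x) (hμeq x i), fderiv_apply₂_apply (hp x)]
  rw [sum_congr rfl fun i _ => hterm i, sum_add_distrib, ← sum_div, hpeq,
    mul_div_cancel_left₀ _ (hμne x)]

/-- Solutions of the unified vakonomic Herglotz field system with nowhere-vanishing
multiplier satisfy the Herglotz field equations. -/
theorem unifiedHerglotzField_implies_herglotzFieldEqs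
    (hm : 1 ≤ m) (hn : 1 ≤ n)
    (L : (Fin n → ℝ) × (Fin n → Fin m → ℝ) × (Fin m → ℝ) → ℝ) (hL : Differentiable ℝ L)
    (u : (Fin m → ℝ) → (Fin n → ℝ)) (z : (Fin m → ℝ) → (Fin m → ℝ))
    (μ : (Fin m → ℝ) → ℝ) (p : (Fin m → ℝ) → Fin n → Fin m → ℝ)
    (hu : Differentiable ℝ u) (hz : Differentiable ℝ z)
    (hμ : Differentiable ℝ μ) (hp : Differentiable ℝ p)
    -- unified Herglotz field system:
    (hμeq : ∀ x i, fderiv ℝ μ x (Pi.single i 1) = -μ x * dLz L (jetProl u z x) i)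
    (hzeq : ∀ x, ∑ i, fderiv ℝ z x (Pi.single i 1) i = L (jetProl u z x))
    (hpeq : ∀ x α, ∑ i, fderiv ℝ p x (Pi.single i 1) α i = μ x * dLu L (jetProl u z x) α)
    (hleg : ∀ x α i, p x α i = μ x * dLv L (jetProl u z x) α i)
    (hμne : ∀ x, μ x ≠ 0) :
    (∀ α i, Differentiable ℝ (fun x => dLv L (jetProl u z x) α i)) ∧
    ∀ x α, ∑ i, fderiv ℝ (fun y => dLv L (jetProl u z y) α i) x (Pi.single i 1)
        = dLu L (jetProl u z x) α
          + ∑ i, dLz L (jetProl u z x) i * dLv L (jetProl u z x) α i :=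
  unifiedHerglotzField_implies_herglotzFieldEqs_general L u z μ p hμ hp hμeq hpeq hleg hμne
end
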